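/- (Combining Lemmas 1 and 2) With the setup of Lemma 2, H(G | A) ≤ 1 + (1 - p_α) log₂(Σ_{j=0}^{α} C(D,j)) + p_α · D, and hence if D > log₂(Σ_{j=0}^{α} C(D,j)) then p_α ≥ (H(G | A) − 1 − log₂(Σ_{j=0}^{α} C(D,j))) / (D − log₂(Σ_{j=0}^{α} C(D,j))). -/

import Mathlib

open Finset

noncomputable section

open scoped Classical

variable {Ω : Type*}

/-- Probability of the event `A` under the mass function `p` on a finite sample space. -/
def pr [Fintype Ω] (p : Ω → ℝ) (A : Ω → Prop) : ℝ :=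
  ∑ ω, if A ω then p ω else 0

/-- `p` is a probability mass function on the finite sample space `Ω`. -/
def IsPMF [Fintype Ω] (p : Ω → ℝ) : Prop :=
  (∀ ω, 0 ≤ p ω) ∧ ∑ ω, p ω = 1

/-- Shannon entropy (in bits) of the random variable `X` under `p`
(with the convention `0 · log 0 = 0` built into `Real.negMulLog`). -/
def ent [Fintype Ω] (p : Ω → ℝ) {S : Type*} [Fintype S] (X : Ω → S) : ℝ :=
  ∑ s, Real.negMulLog (pr p fun ω => X ω = s) / Real.log 2

/-- Conditional Shannon entropy `H(X | Y)` (in bits), via the chain rule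
`H(X | Y) = H(X, Y) - H(Y)`. -/
def condEnt [Fintype Ω] (p : Ω → ℝ) {S T : Type*} [Fintype S] [Fintype T]
    (X : Ω → S) (Y : Ω → T) : ℝ :=
  ent p (fun ω => (X ω, Y ω)) - ent p Y

/-- Mutual information `I(X ; Y)` (in bits). -/
def mutInf [Fintype Ω] (p : Ω → ℝ) {S T : Type*} [Fintype S] [Fintype T]
    (X : Ω → S) (Y : Ω → T) : ℝ :=
  ent p X + ent p Y - ent p fun ω => (X ω, Y ω)

/-- The conditional mass function of `p` given the event `A`
(the zero function if `A` has probability zero). -/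
def condPMF [Fintype Ω] (p : Ω → ℝ) (A : Ω → Prop) : Ω → ℝ :=
  fun ω => if A ω then p ω / pr p A else 0

/-- `X → Y → A` is a Markov chain: `A` is conditionally independent of `X` given `Y`
(stated in multiplied-out form to avoid division). -/
def MarkovChain [Fintype Ω] (p : Ω → ℝ) {S T U : Type*}
    (X : Ω → S) (Y : Ω → T) (A : Ω → U) : Prop :=
  ∀ (x : S) (y : T) (a : U), 0 < pr p (fun ω => X ω = x ∧ Y ω = y) →
    pr p (fun ω => A ω = a ∧ Y ω = y ∧ X ω = x) * pr p (fun ω => Y ω = y) =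
      pr p (fun ω => A ω = a ∧ Y ω = y) * pr p (fun ω => X ω = x ∧ Y ω = y)

/-- `V(α) = Σ_{j=0}^{α} C(D, j)`, the size of a Hamming ball of radius `α` in `{0,1}^D`. -/
def Vball (D α : ℕ) : ℕ :=
  ∑ j ∈ Finset.range (α + 1), D.choose j

/-- The binary entropy function (in bits). -/
def binEnt (q : ℝ) : ℝ :=
  -(q * Real.logb 2 q) - (1 - q) * Real.logb 2 (1 - q)

/-!
Let `E` be the indicator of `α < d(G, A)`; it is a function of `(G, A)`, so
`H(G | A) = H(E | A) + H(G | E, A)`. The flag costs at most one bit. Given `(E, A) = (e, a)`,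
`G` lies in all of `{0,1}^D` if `e` holds and in the Hamming ball of radius `α` around `a`
otherwise, and an entropy is at most the logarithm of the size of the support; averaging
gives `H(G | E, A) ≤ p_α D + (1 - p_α) log₂ V(α)`. The second claim is the first one solved
for `p_α`.
-/

open Real

section Probability

variable [Fintype Ω] {p : Ω → ℝ}

lemma pr_nonneg (hp : ∀ ω, 0 ≤ p ω) (C : Ω → Prop) : 0 ≤ pr p C :=
  sum_nonneg fun ω _ => by split <;> simp [hp ω]

lemma pr_congr {C C' : Ω → Prop} (h : ∀ ω, C ω ↔ C' ω) : pr p C = pr p C' := by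
  rw [show C = C' from funext fun ω => propext (h ω)]

lemma sum_pr_and {S : Type*} [Fintype S] (X : Ω → S) (C : Ω → Prop) :
    ∑ s, pr p (fun ω => X ω = s ∧ C ω) = pr p C := by
  unfold pr
  rw [sum_comm]
  refine sum_congr rfl fun ω _ => ?_
  by_cases hC : C ω <;> simp [hC]

lemma sum_pr_mul {T : Type*} [Fintype T] (Y : Ω → T) (f : T → ℝ) :
    ∑ t, pr p (fun ω => Y ω = t) * f t = ∑ ω, p ω * f (Y ω) := by
  simp only [pr, sum_mul, ite_mul, zero_mul]
  rw [sum_comm]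
  simp

lemma sum_pr_eq_one (hp : IsPMF p) {T : Type*} [Fintype T] (Y : Ω → T) :
    ∑ t, pr p (fun ω => Y ω = t) = 1 := by
  simpa [hp.2] using sum_pr_mul (p := p) Y 1

lemma sum_mul_ite (hp : IsPMF p) (C : Ω → Prop) [DecidablePred C] (x y : ℝ) :
    ∑ ω, p ω * (if C ω then x else y) = pr p C * x + (1 - pr p C) * y := by
  rw [← hp.2, pr, sum_mul, ← sum_sub_distrib, sum_mul, ← sum_add_distrib]
  refine sum_congr rfl fun ω _ => ?_
  split_ifs <;> ring

end Probability

lemma sum_negMulLog_le {ι : Type*} (s : Finset ι) {q : ι → ℝ} (hq : ∀ i ∈ s, 0 ≤ q i) :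
    ∑ i ∈ s, negMulLog (q i) ≤
      negMulLog (∑ i ∈ s, q i) + (∑ i ∈ s, q i) * log #s := by
  rcases s.eq_empty_or_nonempty with rfl | hs
  · simp
  have hn : (0 : ℝ) < #s := by exact_mod_cast hs.card_pos
  have jensen := concaveOn_negMulLog.le_map_sum (t := s) (w := fun _ => (#s : ℝ)⁻¹) (p := q)
    (fun _ _ => by positivity) (by simp [hn.ne']) hq
  have h_inv : negMulLog (#s : ℝ)⁻¹ = (#s : ℝ)⁻¹ * log #s := by simp [negMulLog, log_inv]
  simp only [smul_eq_mul, ← mul_sum, negMulLog_mul, h_inv] at jensen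
  rw [← mul_le_mul_iff_right₀ (inv_pos.2 hn)]
  linarith

section Entropy

variable [Fintype Ω] {p : Ω → ℝ}

def natEnt (p : Ω → ℝ) {S : Type*} [Fintype S] (X : Ω → S) : ℝ :=
  ∑ s, negMulLog (pr p fun ω => X ω = s)

lemma ent_eq_natEnt_div {S : Type*} [Fintype S] (X : Ω → S) :
    ent p X = natEnt p X / log 2 := by
  rw [ent, natEnt, sum_div]

lemma natEnt_comp_of_injective {S T : Type*} [Fintype S] [Fintype T] (X : Ω → S)
    {f : S → T} (hf : Function.Injective f) :
    natEnt p (fun ω => f (X ω)) = natEnt p X := by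
  refine (Fintype.sum_of_injective f hf _ _ (fun t ht => ?_) fun s => ?_).symm
  · rw [pr_congr (C' := fun _ => False) fun ω => iff_false_intro fun h => ht ⟨X ω, h⟩]
    simp [pr]
  · exact congrArg negMulLog (pr_congr fun ω => hf.eq_iff.symm)

lemma natEnt_pair_sub_le {S T : Type*} [Fintype S] [Fintype T] (hp : ∀ ω, 0 ≤ p ω)
    (X : Ω → S) (Y : Ω → T) (B : T → Finset S) (hB : ∀ ω, X ω ∈ B (Y ω)) :
    natEnt p (fun ω => (X ω, Y ω)) - natEnt p Y ≤
      ∑ t, pr p (fun ω => Y ω = t) * log #(B t) := by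
  have hjoint : natEnt p (fun ω => (X ω, Y ω)) =
      ∑ t, ∑ s, negMulLog (pr p fun ω => X ω = s ∧ Y ω = t) := by
    rw [natEnt, Fintype.sum_prod_type_right]
    simp only [Prod.ext_iff]
  rw [hjoint, natEnt, ← sum_sub_distrib]
  refine sum_le_sum fun t _ => ?_
  have hout : ∀ s ∉ B t, pr p (fun ω => X ω = s ∧ Y ω = t) = 0 := fun s hs =>
    sum_eq_zero fun ω _ => if_neg fun ⟨hX, hY⟩ => hs (hX ▸ hY ▸ hB ω)
  have hmarg : ∑ s ∈ B t, pr p (fun ω => X ω = s ∧ Y ω = t) = pr p fun ω => Y ω = t := by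
    rw [sum_subset (B t).subset_univ fun s _ hs => hout s hs, sum_pr_and]
  rw [← sum_subset (B t).subset_univ fun s _ hs => by rw [hout s hs, negMulLog_zero]]
  have := sum_negMulLog_le (B t) fun s _ => pr_nonneg hp fun ω => X ω = s ∧ Y ω = t
  rw [hmarg] at this
  linarith

end Entropy

section Hamming

variable {ι : Type*} [Fintype ι] [DecidableEq ι]

lemma card_hammingDist_eq (a : ι → Bool) (j : ℕ) :
    #{x : ι → Bool | hammingDist x a = j} = (Fintype.card ι).choose j := by
  rw [← card_univ, ← card_powersetCard]
  refine card_nbij' (fun x => ({i | x i ≠ a i} : Finset ι))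
    (fun s i => if i ∈ s then !a i else a i) ?_ ?_ ?_ ?_
  · intro x hx
    simpa [mem_powersetCard, hammingDist] using hx
  · intro s hs
    simp only [mem_coe, mem_powersetCard, mem_filter, mem_univ, true_and] at hs ⊢
    rw [← hs.2, hammingDist]
    congr 1
    ext i
    by_cases hi : i ∈ s <;> simp [hi]
  · intro x _
    funext i
    by_cases h : x i = a i
    · simp [h]
    · simpa [h] using (Bool.not_eq.mpr h).symm
  · intro s _
    ext i
    by_cases hi : i ∈ s <;> simp [hi]

lemma card_hammingDist_le (a : ι → Bool) (r : ℕ) :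
    #{x : ι → Bool | hammingDist x a ≤ r} = Vball (Fintype.card ι) r := by
  rw [card_eq_sum_card_fiberwise (f := fun x => hammingDist x a) (t := range (r + 1))
    fun x hx => by simpa [Nat.lt_succ_iff] using hx, Vball]
  refine sum_congr rfl fun j hj => ?_
  rw [filter_filter, ← card_hammingDist_eq a j]
  congr 1
  ext x
  simp only [mem_filter, mem_univ, true_and, and_iff_right_iff_imp]
  rintro rfl
  simpa [Nat.lt_succ_iff] using hj

end Hamming

lemma natEnt_pair_sub_le_hammingDist [Fintype Ω] {ι : Type*} [Fintype ι] [DecidableEq ι]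
    {p : Ω → ℝ} (hp : IsPMF p) (G A : Ω → ι → Bool) (r : ℕ) :
    natEnt p (fun ω => (G ω, A ω)) - natEnt p A ≤
      log 2 + (1 - pr p fun ω => r < hammingDist (G ω) (A ω)) * log (Vball (Fintype.card ι) r)
        + (pr p fun ω => r < hammingDist (G ω) (A ω)) * (Fintype.card ι * log 2) := by
  set E : Ω → Bool := fun ω => decide (r < hammingDist (G ω) (A ω))
  have hrelabel : natEnt p (fun ω => (G ω, A ω)) = natEnt p (fun ω => (G ω, (E ω, A ω))) :=
    (natEnt_comp_of_injective (fun ω => (G ω, A ω))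
      (f := fun x => (x.1, (decide (r < hammingDist x.1 x.2), x.2)))
      fun x y h => by
        simp only [Prod.mk.injEq] at h
        exact Prod.ext h.1 h.2.2).symm
  have hflag : natEnt p (fun ω => (E ω, A ω)) - natEnt p A ≤ log 2 := by
    have := natEnt_pair_sub_le hp.1 E A (fun _ => univ) fun _ => mem_univ _
    simpa [← sum_mul, sum_pr_eq_one hp] using this
  let B : Bool × (ι → Bool) → Finset (ι → Bool) := fun t =>
    if t.1 then univ else ({x | hammingDist x t.2 ≤ r} : Finset _)
  have hcard : ∀ t, log #(B t) =
      if t.1 then Fintype.card ι * log 2 else log (Vball (Fintype.card ι) r) := by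
    rintro ⟨_ | _, a⟩ <;> simp [B, card_hammingDist_le, log_pow]
  have hball := natEnt_pair_sub_le hp.1 G (fun ω => (E ω, A ω)) B
    fun ω => by by_cases h : r < hammingDist (G ω) (A ω) <;> simp [B, E, h, le_of_not_gt]
  rw [sum_pr_mul] at hball
  simp only [hcard, E, decide_eq_true_eq, sum_mul_ite hp] at hball
  rw [hrelabel]
  linarith

theorem stmt8_general [Fintype Ω] {D : ℕ} (p : Ω → ℝ) (hp : IsPMF p)
    (G A : Ω → (Fin D → Bool)) (α : ℕ)
    (pα : ℝ) (hpα : pα = pr p (fun ω => α < hammingDist (G ω) (A ω))) :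
    condEnt p G A ≤ 1 + (1 - pα) * Real.logb 2 (Vball D α) + pα * D ∧
    (Real.logb 2 (Vball D α) < D →
      (condEnt p G A - 1 - Real.logb 2 (Vball D α)) /
          ((D : ℝ) - Real.logb 2 (Vball D α)) ≤ pα) := by
  have hbound : condEnt p G A ≤ 1 + (1 - pα) * logb 2 (Vball D α) + pα * D := by
    have hnats := natEnt_pair_sub_le_hammingDist hp G A α
    rw [Fintype.card_fin, ← hpα] at hnats
    rw [condEnt, ent_eq_natEnt_div, ent_eq_natEnt_div, ← sub_div,
      div_le_iff₀ (log_pos one_lt_two), logb]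
    refine hnats.trans (le_of_eq ?_)
    field_simp
  refine ⟨hbound, fun hV => ?_⟩
  rw [div_le_iff₀ (sub_pos.2 hV)]
  linarith

/-- Combining Lemmas 1 and 2: `H(G | A) ≤ 1 + (1 - p_α) log₂ V(α) + p_α D`, and hence,
if `D > log₂ V(α)`, then
`p_α ≥ (H(G | A) - 1 - log₂ V(α)) / (D - log₂ V(α))`. -/
theorem stmt8 [Fintype Ω] {D : ℕ} (p : Ω → ℝ) (hp : IsPMF p)
    (G A : Ω → (Fin D → Bool)) (α : ℕ) (hα : α < D)
    (pα : ℝ) (hpα : pα = pr p (fun ω => α < hammingDist (G ω) (A ω))) :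
    condEnt p G A ≤ 1 + (1 - pα) * Real.logb 2 (Vball D α) + pα * D ∧
    (Real.logb 2 (Vball D α) < D →
      (condEnt p G A - 1 - Real.logb 2 (Vball D α)) /
          ((D : ℝ) - Real.logb 2 (Vball D α)) ≤ pα) :=
  stmt8_general p hp G A α pα hpα
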